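/- Fix integers k ≥ 1, d ≥ 1, n ≥ 1 and positive integers r_1, …, r_d. Let B_n^{(r_i)} be the set of measurable k-colorings f of ℝ^d for which there exists a cube contained in [−n,n]^d having a fair splitting with exactly r_i cuts in the i-th coordinate direction for each i, and with granularity at least 1/n. Then B_n^{(r_i)} is closed with respect to the distance d: if (f_m) is a sequence in B_n^{(r_i)} and f is a measurable k-coloring with d(f_m, f) → 0, then f ∈ B_n^{(r_i)}. -/

import Mathlib

open MeasureTheory

/-- The cell (cuboid) of the grid determined by the cut points `y`, indexed by `j`. -/
def splitCell {d : ℕ} (s : Fin d → ℕ) (y : (i : Fin d) → Fin (s i + 2) → ℝ)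
    (j : (i : Fin d) → Fin (s i + 1)) : Set (Fin d → ℝ) :=
  Set.univ.pi fun i => Set.Icc (y i (j i).castSucc) (y i (j i).succ)

/-- `y` is a fair splitting (w.r.t. the coloring `c`) of the cube with corner `a` and
side length `L`, with `s i` cuts in direction `i`. -/
def IsFairSplitting {d k : ℕ} (c : (Fin d → ℝ) → Fin k) (a : Fin d → ℝ) (L : ℝ)
    (s : Fin d → ℕ) (y : (i : Fin d) → Fin (s i + 2) → ℝ) : Prop :=
  (∀ i, StrictMono (y i)) ∧ (∀ i, y i 0 = a i) ∧ (∀ i, y i (Fin.last (s i + 1)) = a i + L) ∧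
  ∃ Φ : ((i : Fin d) → Fin (s i + 1)) → Bool,
    ∀ j : Fin k,
      volume (c ⁻¹' {j} ∩ ⋃ m ∈ {m | Φ m = true}, splitCell s y m) =
      volume (c ⁻¹' {j} ∩ ⋃ m ∈ {m | Φ m = false}, splitCell s y m)

/-- The distance between two measurable colorings `f, g` of `ℝ^d`:
`d(f,g) = ∑_{n=1}^∞ λ(D_n(f,g)) / (n^d · 2^(n+1))`, where
`D_n(f,g) = {x ∈ [-n,n]^d : f x ≠ g x}`. -/
noncomputable def colDist {d k : ℕ} (f g : (Fin d → ℝ) → Fin k) : ℝ :=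
  ∑' n : ℕ,
    (volume {x : Fin d → ℝ |
        x ∈ Set.Icc (fun _ => -((n : ℝ) + 1)) (fun _ => (n : ℝ) + 1) ∧ f x ≠ g x}).toReal
      / (((n : ℝ) + 1) ^ d * 2 ^ (n + 2))

/-- `f` belongs to `B_n^{(r_i)}`: there is a cube inside `[-n,n]^d` having a fair splitting
(w.r.t. `f`) with exactly `r i` cuts in direction `i` and granularity at least `1/n`. -/
def MemB {d k : ℕ} (n : ℕ) (r : Fin d → ℕ) (f : (Fin d → ℝ) → Fin k) : Prop :=
  ∃ (a : Fin d → ℝ) (L : ℝ), 0 < L ∧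
    (∀ i, -(n : ℝ) ≤ a i ∧ a i + L ≤ (n : ℝ)) ∧
    ∃ y : (i : Fin d) → Fin (r i + 2) → ℝ,
      IsFairSplitting f a L r y ∧
      ∀ i, ∀ j : Fin (r i + 1), 1 / (n : ℝ) ≤ y i j.succ - y i j.castSucc

/-!
Pick, for each `f m`, a cube, its cut points and a fair two-colouring `Φ` of the cells. The
parameters (corner, side length, cut points) lie in a compact set and `Φ` in a finite one, so
along a subsequence `Φ` is constant and the parameters converge. The conditions on the cube and
on the granularity are closed, and granularity `≥ 1/n` keeps the limiting cuts strictly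
increasing. As for fairness, `colDist (f m) g → 0` makes the measure of `{f m ≠ g}` in every box
tend to `0`, and off the (null) hyperplanes through the limiting cuts, membership in a cell
stabilises, so by dominated convergence the measure of each colour class in each half of the
splitting converges to the corresponding quantity for `g`.
-/

open Filter Set Topology

theorem IsCompact.exists_strictMono_forall_eq_tendsto {X β : Type*} [TopologicalSpace X]
    [FirstCountableTopology X] [Finite β] {K : Set X} (hK : IsCompact K) {x : ℕ → X}
    (hx : ∀ m, x m ∈ K) (Φ : ℕ → β) :
    ∃ b, ∃ a ∈ K, ∃ ψ : ℕ → ℕ, StrictMono ψ ∧ (∀ m, Φ (ψ m) = b) ∧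
      Tendsto (x ∘ ψ) atTop (𝓝 a) := by
  obtain ⟨b, hb⟩ := Finite.exists_infinite_fiber Φ
  obtain ⟨φ, hφ, hφb⟩ := extraction_of_frequently_atTop
    (Nat.frequently_atTop_iff_infinite.2 (Set.infinite_coe_iff.1 hb))
  obtain ⟨a, ha, ψ, hψ, hlim⟩ := hK.tendsto_subseq fun m => hx (φ m)
  exact ⟨b, a, ha, φ ∘ ψ, hφ.comp hψ, fun m => hφb (ψ m), hlim⟩

section Order

variable {ι α : Type*} [LinearOrder α] [TopologicalSpace α] [OrderTopology α]
  {l : Filter ι} {u : ι → α} {a b : α}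

theorem Filter.Tendsto.eventually_le_const_iff (hu : Tendsto u l (𝓝 a)) (hab : a ≠ b) :
    ∀ᶠ m in l, (u m ≤ b ↔ a ≤ b) := by
  rcases hab.lt_or_gt with h | h
  · filter_upwards [hu.eventually_lt_const h] with m hm using iff_of_true hm.le h.le
  · filter_upwards [hu.eventually_const_lt h] with m hm using iff_of_false hm.not_ge h.not_ge

theorem Filter.Tendsto.eventually_const_le_iff (hu : Tendsto u l (𝓝 a)) (hab : a ≠ b) :
    ∀ᶠ m in l, (b ≤ u m ↔ b ≤ a) := by
  rcases hab.lt_or_gt with h | h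
  · filter_upwards [hu.eventually_lt_const h] with m hm using iff_of_false hm.not_ge h.not_ge
  · filter_upwards [hu.eventually_const_lt h] with m hm using iff_of_true hm.le h.le

end Order

theorem dist_measureReal_preimage_inter_le {α β : Type*} [MeasurableSpace α] {μ : Measure α}
    (f g : α → β) (b : β) {U B : Set α} (hUB : U ⊆ B) (hB : μ B ≠ ⊤) :
    dist (μ.real (f ⁻¹' {b} ∩ U)) (μ.real (g ⁻¹' {b} ∩ U)) ≤ μ.real {x | x ∈ B ∧ f x ≠ g x} := by
  have hle : ∀ f g : α → β, μ.real (f ⁻¹' {b} ∩ U) ≤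
      μ.real (g ⁻¹' {b} ∩ U) + μ.real {x | x ∈ B ∧ f x ≠ g x} := fun f g => by
    refine ENNReal.toReal_le_add ((measure_mono ?_).trans (measure_union_le _ _))
      (measure_ne_top_of_subset (inter_subset_right.trans hUB) hB)
      (measure_ne_top_of_subset (fun x hx => hx.1) hB)
    rintro x ⟨hfx, hxU⟩
    by_cases hgx : g x = b
    · exact .inl ⟨hgx, hxU⟩
    · exact .inr ⟨hUB hxU, fun h => hgx (h ▸ hfx)⟩
  have hgf := hle g f
  simp_rw [ne_comm (a := g _)] at hgf
  rw [Real.dist_eq, abs_sub_le_iff]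
  constructor <;> linarith [hle f g]

section ColDist

variable {d k : ℕ}

theorem colDist_term_le (f g : (Fin d → ℝ) → Fin k) (N : ℕ) :
    (volume {x : Fin d → ℝ |
        x ∈ Icc (fun _ => -((N : ℝ) + 1)) (fun _ => (N : ℝ) + 1) ∧ f x ≠ g x}).toReal
      / (((N : ℝ) + 1) ^ d * 2 ^ (N + 2)) ≤ 2 ^ d / 4 * (1 / 2) ^ N := by
  have hbox : (volume (Icc (fun _ => -((N : ℝ) + 1)) (fun _ => (N : ℝ) + 1) :
      Set (Fin d → ℝ))).toReal = (2 * ((N : ℝ) + 1)) ^ d := by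
    rw [Real.volume_Icc_pi_toReal fun _ => by linarith]
    simp only [Finset.prod_const, Finset.card_univ, Fintype.card_fin]
    ring
  calc _ ≤ (2 * ((N : ℝ) + 1)) ^ d / (((N : ℝ) + 1) ^ d * 2 ^ (N + 2)) := by
        gcongr
        rw [← hbox]
        exact ENNReal.toReal_mono measure_Icc_lt_top.ne (measure_mono fun x hx => hx.1)
    _ = 2 ^ d / 4 * (1 / 2) ^ N := by
        rw [mul_pow, one_div_pow, pow_add]
        field_simp
        ring

theorem measureReal_ne_le_mul_colDist (f g : (Fin d → ℝ) → Fin k) (N : ℕ) :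
    volume.real {x : Fin d → ℝ |
        x ∈ Icc (fun _ => -((N : ℝ) + 1)) (fun _ => (N : ℝ) + 1) ∧ f x ≠ g x}
      ≤ ((N : ℝ) + 1) ^ d * 2 ^ (N + 2) * colDist f g := by
  rw [← div_le_iff₀' (by positivity)]
  exact Summable.le_tsum (.of_nonneg_of_le (fun _ => by positivity) (colDist_term_le f g)
    (summable_geometric_two.mul_left _)) N fun _ _ => by positivity

theorem tendsto_measureReal_ne_of_tendsto_colDist {f : ℕ → (Fin d → ℝ) → Fin k}
    {g : (Fin d → ℝ) → Fin k} (hconv : Tendsto (fun m => colDist (f m) g) atTop (𝓝 0))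
    (N : ℕ) :
    Tendsto (fun m => volume.real {x : Fin d → ℝ |
        x ∈ Icc (fun _ => -((N : ℝ) + 1)) (fun _ => (N : ℝ) + 1) ∧ f m x ≠ g x})
      atTop (𝓝 0) :=
  squeeze_zero (fun _ => measureReal_nonneg) (fun m => measureReal_ne_le_mul_colDist _ _ N)
    (by simpa using hconv.const_mul (((N : ℝ) + 1) ^ d * 2 ^ (N + 2)))

end ColDist

section SplitCell

variable {d : ℕ} {s : Fin d → ℕ}

theorem measurableSet_biUnion_splitCell (y : (i : Fin d) → Fin (s i + 2) → ℝ)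
    (S : Set ((i : Fin d) → Fin (s i + 1))) : MeasurableSet (⋃ c ∈ S, splitCell s y c) :=
  .biUnion (to_countable S) fun _ _ => .univ_pi fun _ => measurableSet_Icc

theorem biUnion_splitCell_subset_Icc {y : (i : Fin d) → Fin (s i + 2) → ℝ} {C : ℝ}
    (hy : y ∈ Icc (fun _ _ => -C) (fun _ _ => C)) (S : Set ((i : Fin d) → Fin (s i + 1))) :
    ⋃ c ∈ S, splitCell s y c ⊆ Icc (fun _ => -C) (fun _ => C) := by
  refine iUnion₂_subset fun c _ x hx => ⟨fun i => ?_, fun i => ?_⟩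
  · exact (hy.1 i _).trans (hx i (mem_univ i)).1
  · exact (hx i (mem_univ i)).2.trans (hy.2 i _)

theorem measure_inter_biUnion_splitCell_ne_top {y : (i : Fin d) → Fin (s i + 2) → ℝ} {C : ℝ}
    (hy : y ∈ Icc (fun _ _ => -C) (fun _ _ => C)) (A : Set (Fin d → ℝ))
    (S : Set ((i : Fin d) → Fin (s i + 1))) :
    volume (A ∩ ⋃ c ∈ S, splitCell s y c) ≠ ⊤ :=
  measure_ne_top_of_subset (inter_subset_right.trans (biUnion_splitCell_subset_Icc hy S))
    measure_Icc_lt_top.ne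

theorem eventually_mem_splitCell_iff {ι : Type*} {l : Filter ι}
    {y : ι → (i : Fin d) → Fin (s i + 2) → ℝ} {y₀ : (i : Fin d) → Fin (s i + 2) → ℝ}
    (hy : Tendsto y l (𝓝 y₀)) {x : Fin d → ℝ} (hx : ∀ i j, x i ≠ y₀ i j)
    (c : (i : Fin d) → Fin (s i + 1)) :
    ∀ᶠ m in l, (x ∈ splitCell s (y m) c ↔ x ∈ splitCell s y₀ c) := by
  have hyij : ∀ i j, Tendsto (fun m => y m i j) l (𝓝 (y₀ i j)) := fun i j =>
    tendsto_pi_nhds.1 (tendsto_pi_nhds.1 hy i) j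
  filter_upwards [eventually_all.2 fun i =>
    ((hyij i _).eventually_le_const_iff (hx i _).symm).and
      ((hyij i _).eventually_const_le_iff (hx i _).symm)] with m hm
  simp only [splitCell, mem_univ_pi, mem_Icc]
  exact forall_congr' fun i => and_congr (hm i).1 (hm i).2

theorem ae_forall_ne_splitPoint (y : (i : Fin d) → Fin (s i + 2) → ℝ) :
    ∀ᵐ x : Fin d → ℝ, ∀ i j, x i ≠ y i j := by
  simp only [ae_all_iff]
  intro i j
  exact Measure.ae_eval_ne (fun _ : Fin d => (volume : Measure ℝ)) i (y i j)

theorem tendsto_measure_inter_biUnion_splitCell {ι : Type*} {l : Filter ι}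
    [l.IsCountablyGenerated] {A : Set (Fin d → ℝ)} (hA : MeasurableSet A)
    (S : Set ((i : Fin d) → Fin (s i + 1)))
    {y : ι → (i : Fin d) → Fin (s i + 2) → ℝ} {y₀ : (i : Fin d) → Fin (s i + 2) → ℝ}
    (hy : Tendsto y l (𝓝 y₀)) {C : ℝ} (hC : ∀ m, y m ∈ Icc (fun _ _ => -C) (fun _ _ => C)) :
    Tendsto (fun m => volume (A ∩ ⋃ c ∈ S, splitCell s (y m) c)) l
      (𝓝 (volume (A ∩ ⋃ c ∈ S, splitCell s y₀ c))) := by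
  refine tendsto_measure_of_ae_tendsto_indicator l
    (hA.inter (measurableSet_biUnion_splitCell y₀ S))
    (fun m => hA.inter (measurableSet_biUnion_splitCell (y m) S)) measurableSet_Icc
    measure_Icc_lt_top.ne
    (.of_forall fun m => inter_subset_right.trans (biUnion_splitCell_subset_Icc (hC m) S)) ?_
  filter_upwards [ae_forall_ne_splitPoint y₀] with x hx
  filter_upwards [eventually_all.2 (eventually_mem_splitCell_iff hy hx)] with m hm
  simp only [mem_inter_iff, mem_iUnion, hm]

end SplitCell

section Fairness

variable {d k : ℕ} {s : Fin d → ℕ}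

def IsFairCellPartition (c : (Fin d → ℝ) → Fin k) (s : Fin d → ℕ)
    (y : (i : Fin d) → Fin (s i + 2) → ℝ) (Φ : ((i : Fin d) → Fin (s i + 1)) → Bool) : Prop :=
  ∀ j : Fin k,
    volume (c ⁻¹' {j} ∩ ⋃ m ∈ {m | Φ m = true}, splitCell s y m) =
    volume (c ⁻¹' {j} ∩ ⋃ m ∈ {m | Φ m = false}, splitCell s y m)

theorem tendsto_measureReal_preimage_inter_biUnion_splitCell {f : ℕ → (Fin d → ℝ) → Fin k}
    {g : (Fin d → ℝ) → Fin k} (hconv : Tendsto (fun m => colDist (f m) g) atTop (𝓝 0))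
    (hg : ∀ j : Fin k, MeasurableSet (g ⁻¹' {j})) (j : Fin k)
    (S : Set ((i : Fin d) → Fin (s i + 1)))
    {y : ℕ → (i : Fin d) → Fin (s i + 2) → ℝ} {y₀ : (i : Fin d) → Fin (s i + 2) → ℝ}
    (hy : Tendsto y atTop (𝓝 y₀)) {N : ℕ}
    (hN : ∀ m, y m ∈ Icc (fun _ _ => -(N : ℝ)) (fun _ _ => (N : ℝ))) :
    Tendsto (fun m => volume.real (f m ⁻¹' {j} ∩ ⋃ c ∈ S, splitCell s (y m) c)) atTop
      (𝓝 (volume.real (g ⁻¹' {j} ∩ ⋃ c ∈ S, splitCell s y₀ c))) := by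
  have hbox : (Icc (fun _ => -(N : ℝ)) (fun _ => (N : ℝ)) : Set (Fin d → ℝ)) ⊆
      Icc (fun _ => -((N : ℝ) + 1)) (fun _ => (N : ℝ) + 1) :=
    Icc_subset_Icc (fun _ => by simp) (fun _ => by simp)
  have hg_piece := (ENNReal.tendsto_toReal (measure_inter_biUnion_splitCell_ne_top
      (isClosed_Icc.mem_of_tendsto hy (.of_forall hN)) _ S)).comp
    (tendsto_measure_inter_biUnion_splitCell (hg j) S hy hN)
  refine hg_piece.congr_dist (squeeze_zero (fun _ => dist_nonneg) (fun m => ?_)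
    (tendsto_measureReal_ne_of_tendsto_colDist hconv N))
  rw [dist_comm]
  exact dist_measureReal_preimage_inter_le (f m) g j
    ((biUnion_splitCell_subset_Icc (hN m) S).trans hbox) measure_Icc_lt_top.ne

theorem IsFairCellPartition.of_tendsto {f : ℕ → (Fin d → ℝ) → Fin k}
    {g : (Fin d → ℝ) → Fin k} (hconv : Tendsto (fun m => colDist (f m) g) atTop (𝓝 0))
    (hg : ∀ j : Fin k, MeasurableSet (g ⁻¹' {j}))
    {y : ℕ → (i : Fin d) → Fin (s i + 2) → ℝ} {y₀ : (i : Fin d) → Fin (s i + 2) → ℝ}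
    (hy : Tendsto y atTop (𝓝 y₀)) {N : ℕ}
    (hN : ∀ m, y m ∈ Icc (fun _ _ => -(N : ℝ)) (fun _ _ => (N : ℝ)))
    {Φ : ((i : Fin d) → Fin (s i + 1)) → Bool} (hfair : ∀ m, IsFairCellPartition (f m) s (y m) Φ) :
    IsFairCellPartition g s y₀ Φ := by
  intro j
  have hlim := fun b => tendsto_measureReal_preimage_inter_biUnion_splitCell hconv hg j
    {c | Φ c = b} hy hN
  have hfin := measure_inter_biUnion_splitCell_ne_top
    (isClosed_Icc.mem_of_tendsto hy (.of_forall hN)) (g ⁻¹' {j})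
  refine (ENNReal.toReal_eq_toReal_iff' (hfin {c | Φ c = true}) (hfin {c | Φ c = false})).1
    (tendsto_nhds_unique (hlim true) ?_)
  simpa only [measureReal_def, hfair _ j] using hlim false

end Fairness

section GridParams

variable {d k n : ℕ} {r : Fin d → ℕ} {p : (Fin d → ℝ) × ℝ × ((i : Fin d) → Fin (r i + 2) → ℝ)}

/-- A point `(a, L, y)` encodes the cube `a + [0, L]^d` together with the cut points `y`. -/
def gridParams (n : ℕ) (r : Fin d → ℕ) :
    Set ((Fin d → ℝ) × ℝ × ((i : Fin d) → Fin (r i + 2) → ℝ)) :=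
  {p | (∀ i, -(n : ℝ) ≤ p.1 i ∧ p.1 i + p.2.1 ≤ n) ∧ (∀ i, p.2.2 i 0 = p.1 i) ∧
    (∀ i, p.2.2 i (Fin.last (r i + 1)) = p.1 i + p.2.1) ∧
    ∀ i, ∀ j : Fin (r i + 1), 1 / (n : ℝ) ≤ p.2.2 i j.succ - p.2.2 i j.castSucc}

theorem monotone_of_mem_gridParams (hp : p ∈ gridParams n r) (i : Fin d) :
    Monotone (p.2.2 i) :=
  Fin.monotone_iff_le_succ.2 fun j =>
    sub_nonneg.1 ((by positivity : (0 : ℝ) ≤ 1 / n).trans (hp.2.2.2 i j))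

theorem strictMono_of_mem_gridParams (hn : 0 < n) (hp : p ∈ gridParams n r) (i : Fin d) :
    StrictMono (p.2.2 i) :=
  Fin.strictMono_iff_lt_succ.2 fun j =>
    sub_pos.1 ((by positivity : (0 : ℝ) < 1 / n).trans_le (hp.2.2.2 i j))

theorem mem_Icc_of_mem_gridParams (hp : p ∈ gridParams n r) :
    p.2.2 ∈ Icc (fun _ _ => -(n : ℝ)) (fun _ _ => (n : ℝ)) := by
  have hmono := monotone_of_mem_gridParams hp
  obtain ⟨hbd, h0, hlast, -⟩ := hp
  refine ⟨fun i j => ?_, fun i j => ?_⟩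
  · calc -(n : ℝ) ≤ p.2.2 i 0 := h0 i ▸ (hbd i).1
      _ ≤ p.2.2 i j := hmono i (Fin.zero_le j)
  · calc p.2.2 i j ≤ p.2.2 i (Fin.last _) := hmono i (Fin.le_last j)
      _ ≤ n := hlast i ▸ (hbd i).2

theorem pos_of_mem_gridParams [Nonempty (Fin d)] (hn : 0 < n) (hp : p ∈ gridParams n r) :
    0 < p.2.1 := by
  obtain ⟨i⟩ := ‹Nonempty (Fin d)›
  have := strictMono_of_mem_gridParams hn hp i (Fin.last_pos : 0 < Fin.last (r i + 1))
  rw [hp.2.1 i, hp.2.2.1 i] at this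
  linarith

theorem isClosed_gridParams (n : ℕ) (r : Fin d → ℕ) : IsClosed (gridParams n r) := by
  simp only [gridParams, ofPred_and, ofPred_forall]
  refine .inter (isClosed_iInter fun i => .inter (isClosed_le ?_ ?_) (isClosed_le ?_ ?_))
    (.inter (isClosed_iInter fun i => isClosed_eq ?_ ?_)
      (.inter (isClosed_iInter fun i => isClosed_eq ?_ ?_)
        (isClosed_iInter fun i => isClosed_iInter fun j => isClosed_le ?_ ?_))) <;> fun_prop

theorem isCompact_gridParams [Nonempty (Fin d)] (n : ℕ) (r : Fin d → ℕ) :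
    IsCompact (gridParams n r) := by
  obtain ⟨i₀⟩ := ‹Nonempty (Fin d)›
  have hsub : gridParams n r ⊆ Icc (fun _ => -(n : ℝ)) (fun _ => (n : ℝ)) ×ˢ
      Icc 0 (2 * (n : ℝ)) ×ˢ Icc (fun _ _ => -(n : ℝ)) (fun _ _ => (n : ℝ)) := by
    intro p hp
    have hy := mem_Icc_of_mem_gridParams hp
    have hL : p.1 i₀ ≤ p.1 i₀ + p.2.1 := by
      simpa only [hp.2.1, hp.2.2.1] using
        monotone_of_mem_gridParams hp i₀ (Fin.zero_le (Fin.last _))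
    obtain ⟨hbd, h0, -⟩ := hp
    refine ⟨⟨fun i => (hbd i).1, fun i => ?_⟩, ⟨by linarith, by linarith [hbd i₀]⟩, hy⟩
    simpa only [h0] using hy.2 i 0
  exact (isCompact_Icc.prod (isCompact_Icc.prod isCompact_Icc)).of_isClosed_subset
    (isClosed_gridParams n r) hsub

theorem memB_iff [Nonempty (Fin d)] (hn : 0 < n) {f : (Fin d → ℝ) → Fin k} :
    MemB n r f ↔ ∃ p ∈ gridParams n r, ∃ Φ, IsFairCellPartition f r p.2.2 Φ := by
  constructor
  · rintro ⟨a, L, -, hbd, y, ⟨-, h0, hlast, Φ, hΦ⟩, hgran⟩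
    exact ⟨(a, L, y), ⟨hbd, h0, hlast, hgran⟩, Φ, hΦ⟩
  · rintro ⟨⟨a, L, y⟩, hp, Φ, hΦ⟩
    exact ⟨a, L, pos_of_mem_gridParams hn hp, hp.1, y,
      ⟨strictMono_of_mem_gridParams hn hp, hp.2.1, hp.2.2.1, Φ, hΦ⟩, hp.2.2.2⟩

end GridParams

theorem memB_closed_general (k d n : ℕ) (hd : 1 ≤ d) (hn : 1 ≤ n)
    (r : Fin d → ℕ)
    (f : ℕ → (Fin d → ℝ) → Fin k)
    (hfB : ∀ m, MemB n r (f m))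
    (g : (Fin d → ℝ) → Fin k) (hg : ∀ j : Fin k, MeasurableSet (g ⁻¹' {j}))
    (hconv : Filter.Tendsto (fun m => colDist (f m) g) Filter.atTop (nhds 0)) :
    MemB n r g := by
  have : Nonempty (Fin d) := ⟨⟨0, hd⟩⟩
  simp only [memB_iff hn] at hfB ⊢
  choose p hp Φ hΦ using hfB
  obtain ⟨Φ₀, q, hq, ψ, hψ, hΦψ, hpψ⟩ :=
    (isCompact_gridParams n r).exists_strictMono_forall_eq_tendsto hp Φ
  have hyψ : Tendsto (fun m => (p (ψ m)).2.2) atTop (𝓝 q.2.2) :=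
    ((continuous_snd.comp continuous_snd).tendsto q).comp hpψ
  exact ⟨q, hq, Φ₀, .of_tendsto (hconv.comp hψ.tendsto_atTop) hg hyψ
    (fun m => mem_Icc_of_mem_gridParams (hp (ψ m))) fun m => hΦψ m ▸ hΦ (ψ m)⟩

/-- `B_n^{(r_i)}` is closed w.r.t. the distance `colDist`: if colorings `f_m ∈ B_n^{(r_i)}`
converge to a measurable coloring `f`, then `f ∈ B_n^{(r_i)}`. -/
theorem memB_closed (k d n : ℕ) (hk : 1 ≤ k) (hd : 1 ≤ d) (hn : 1 ≤ n)
    (r : Fin d → ℕ) (hr : ∀ i, 1 ≤ r i)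
    (f : ℕ → (Fin d → ℝ) → Fin k)
    (hf : ∀ m, ∀ j : Fin k, MeasurableSet ((f m) ⁻¹' {j}))
    (hfB : ∀ m, MemB n r (f m))
    (g : (Fin d → ℝ) → Fin k) (hg : ∀ j : Fin k, MeasurableSet (g ⁻¹' {j}))
    (hconv : Filter.Tendsto (fun m => colDist (f m) g) Filter.atTop (nhds 0)) :
    MemB n r g :=
  memB_closed_general k d n hd hn r f hfB g hg hconv
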